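/- Let 0<α<1 and 0<u₀<1. Suppose u:[0,∞)→ℝ is continuous and satisfies the integral equation u(t) = E_α(−t^α)u₀ + ∫₀ᵗ (t−s)^{α−1} E_{α,α}(−(t−s)^α) u(s)² ds for all t ≥ 0. Then 0 < u(t) < 1 for all t ≥ 0. -/

import Mathlib

/-!
Write `e t = E_α(-t^α)` and `k t = t^(α-1) E_{α,α}(-t^α)`. Integrating the series termwise
(Beta integrals) gives `∫₀ᵗ k = 1 - e t` and, for every `β > 0`, the Volterra identity
`Γ(α) E_{α,β}(-t^α) + t^(1-β) ∫₀ᵗ (t-s)^(α-1) s^(β-1) E_{α,β}(-s^α) ds = Γ(α)/Γ(β)`.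
For `α ≤ β ≤ 1` the weight `T^(1-β) (T-s)^(α-1)` decreases in `T`, so at a first zero `T` of
such a solution its value near `T` would be controlled by its own integral over a short interval
`[t₁, T]`, which is absurd; hence `e > 0` and `k ≥ 0`. Finally, while `0 < u < 1` on `[0, T)`,
the integral equation gives `e T * u₀ ≤ u T ≤ e T * u₀ + ∫₀ᵀ k = 1 - e T * (1 - u₀)`, so `u`
cannot leave `(0, 1)` at a first exit time.
-/

open Set intervalIntegral

noncomputable def mlE (α x : ℝ) : ℝ := ∑' j : ℕ, x ^ j / Real.Gamma (α * j + 1)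

noncomputable def mlE2 (α x : ℝ) : ℝ := ∑' j : ℕ, x ^ j / Real.Gamma (α * j + α)

open MeasureTheory Filter Topology

theorem Real.rpow_mul_Gamma_le_Gamma_add {a y : ℝ} (ha : 0 < a) (hy : 1 < y) :
    (y - 1) ^ a * Real.Gamma y ≤ Real.Gamma (y + a) := by
  have hy1 : 0 < y - 1 := by linarith
  have hΓ : Real.Gamma y = (y - 1) * Real.Gamma (y - 1) := by
    simpa using Real.Gamma_add_one hy1.ne'
  have hslope := Real.convexOn_log_Gamma.slope_mono_adjacent (mem_Ioi.2 hy1)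
    (mem_Ioi.2 (by linarith : 0 < y + a)) (by linarith : y - 1 < y) (by linarith : y < y + a)
  simp only [Function.comp, sub_sub_cancel, div_one, add_sub_cancel_left] at hslope
  rw [hΓ, Real.log_mul hy1.ne' (Real.Gamma_pos_of_pos hy1).ne', add_sub_cancel_right,
    le_div_iff₀ ha] at hslope
  rw [← Real.log_le_log_iff (by positivity) (Real.Gamma_pos_of_pos (by linarith)),
    Real.log_mul (by positivity) (Real.Gamma_pos_of_pos (by linarith)).ne',
    Real.log_rpow hy1, hΓ, Real.log_mul hy1.ne' (Real.Gamma_pos_of_pos hy1).ne']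
  linarith

-- `mlE α = mittagLeffler α 1` and `mlE2 α = mittagLeffler α α` hold by definition.
noncomputable def mittagLeffler (α β x : ℝ) : ℝ := ∑' n : ℕ, x ^ n / Real.Gamma (α * n + β)

section MittagLeffler

variable {α β : ℝ}

theorem summable_mittagLeffler (hα : 0 < α) (hβ : 0 < β) (x : ℝ) :
    Summable (fun n : ℕ => x ^ n / Real.Gamma (α * n + β)) := by
  have hlin : Tendsto (fun n : ℕ => α * n + β - 1) atTop atTop :=
    tendsto_atTop_add_const_right _ _
      (tendsto_atTop_add_const_right _ _ (tendsto_natCast_atTop_atTop.const_mul_atTop hα))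
  refine summable_of_ratio_norm_eventually_le (r := 1 / 2) (by norm_num) ?_
  filter_upwards [((tendsto_rpow_atTop hα).comp hlin).eventually_ge_atTop (2 * |x|),
    hlin.eventually_gt_atTop 0] with n hx hy
  have hΓ := Real.rpow_mul_Gamma_le_Gamma_add hα (show 1 < α * n + β by linarith)
  have hpos : 0 < Real.Gamma (α * n + β) := Real.Gamma_pos_of_pos (by linarith)
  have hpos' : 0 < Real.Gamma (α * n + β + α) := Real.Gamma_pos_of_pos (by linarith)
  have hx' : 2 * |x| * Real.Gamma (α * n + β) ≤ Real.Gamma (α * n + β + α) :=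
    (mul_le_mul_of_nonneg_right hx hpos.le).trans hΓ
  push_cast
  rw [show α * (n + 1) + β = α * n + β + α by ring, norm_div, norm_div, norm_pow, norm_pow,
    Real.norm_of_nonneg hpos.le, Real.norm_of_nonneg hpos'.le, Real.norm_eq_abs,
    div_le_iff₀ hpos', pow_succ]
  calc |x| ^ n * |x|
      = 1 / 2 * (|x| ^ n / Real.Gamma (α * n + β)) * (2 * |x| * Real.Gamma (α * n + β)) := by
        field_simp
    _ ≤ _ := by gcongr

theorem continuous_mittagLeffler (hα : 0 < α) (hβ : 0 < β) : Continuous (mittagLeffler α β) := by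
  refine continuous_iff_continuousAt.2 fun x₀ => ?_
  set R := |x₀| + 1
  have hx₀ : x₀ ∈ Ioo (-R) R := abs_lt.1 (lt_add_one _)
  refine (continuousOn_tsum (fun n => by fun_prop) (summable_mittagLeffler hα hβ R)
    fun n x hx => ?_).continuousAt (Ioo_mem_nhds hx₀.1 hx₀.2)
  have hΓ : 0 < Real.Gamma (α * n + β) := Real.Gamma_pos_of_pos (by positivity)
  rw [norm_div, norm_pow, Real.norm_of_nonneg hΓ.le, Real.norm_eq_abs]
  gcongr
  exact (abs_lt.2 hx).le

theorem mittagLeffler_zero : mittagLeffler α β 0 = (Real.Gamma β)⁻¹ := by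
  rw [mittagLeffler, tsum_eq_single 0 fun n hn => by simp [zero_pow hn]]
  simp

theorem mittagLeffler_eq_inv_Gamma_add_mul (hα : 0 < α) (hβ : 0 < β) (x : ℝ) :
    mittagLeffler α β x = (Real.Gamma β)⁻¹ + x * mittagLeffler α (β + α) x := by
  rw [mittagLeffler, (summable_mittagLeffler hα hβ x).tsum_eq_zero_add, mittagLeffler,
    ← tsum_mul_left]
  congr 1
  · simp
  · congr 1 with n
    push_cast
    rw [show α * (n + 1) + β = α * n + (β + α) by ring, pow_succ]
    ring

end MittagLeffler

theorem integral_sub_rpow_mul_rpow {p q t : ℝ} (hp : 0 < p) (hq : 0 < q) (ht : 0 < t) :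
    ∫ s in 0..t, (t - s) ^ (p - 1) * s ^ (q - 1)
      = Real.Gamma p * Real.Gamma q / Real.Gamma (p + q) * t ^ (p + q - 1) := by
  have h := Complex.betaIntegral_scaled q p ht
  rw [Complex.betaIntegral_eq_Gamma_mul_div _ _ (by simpa) (by simpa)] at h
  have hcongr : ∀ s ∈ uIcc 0 t, (s : ℂ) ^ ((q : ℂ) - 1) * ((t : ℂ) - s) ^ ((p : ℂ) - 1)
      = (((t - s) ^ (p - 1) * s ^ (q - 1) : ℝ) : ℂ) := by
    intro s hs
    rw [uIcc_of_le ht.le] at hs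
    push_cast
    rw [Complex.ofReal_cpow hs.1, Complex.ofReal_cpow (sub_nonneg.2 hs.2)]
    push_cast
    ring
  rw [integral_congr hcongr, integral_ofReal] at h
  apply Complex.ofReal_injective
  rw [h, Complex.ofReal_mul, Complex.ofReal_cpow ht.le, Complex.ofReal_div, Complex.ofReal_mul,
    ← Complex.Gamma_ofReal, ← Complex.Gamma_ofReal, ← Complex.Gamma_ofReal]
  push_cast
  ring_nf

theorem intervalIntegrable_sub_rpow_mul_rpow_mul {p q t : ℝ} {g : ℝ → ℝ} (hp : 0 < p) (hq : 0 < q)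
    (ht : 0 < t) (hg : ContinuousOn g (Icc 0 t)) :
    IntervalIntegrable (fun s => (t - s) ^ (p - 1) * (s ^ (q - 1) * g s)) volume 0 t := by
  have h : IntervalIntegrable (fun s => (t - s) ^ (p - 1) * s ^ (q - 1)) volume 0 t :=
    intervalIntegrable_of_integral_ne_zero
      (by rw [integral_sub_rpow_mul_rpow hp hq ht]; positivity)
  simpa only [mul_assoc] using h.mul_continuousOn (by rwa [uIcc_of_le ht.le])

theorem Real.rpow_mul_natCast_add {x : ℝ} (hx : 0 < x) (a c : ℝ) (n : ℕ) :
    x ^ (a * n + c) = (x ^ a) ^ n * x ^ c := by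
  rw [Real.rpow_add hx, Real.rpow_mul_natCast hx.le]

section RiemannLiouville

variable {α β γ t : ℝ}

theorem integral_sub_rpow_mul_mittagLeffler_term (hα : 0 < α) (hβ : 0 < β) (hγ : 0 < γ)
    (ht : 0 < t) (y : ℝ) (n : ℕ) :
    ∫ s in 0..t, (t - s) ^ (γ - 1) * (s ^ (β - 1) * ((y * s ^ α) ^ n / Real.Gamma (α * n + β)))
      = Real.Gamma γ * t ^ (β + γ - 1) * ((y * t ^ α) ^ n / Real.Gamma (α * n + (β + γ))) := by
  have hq : 0 < α * n + β := by positivity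
  have hΓ : 0 < Real.Gamma (α * n + β) := Real.Gamma_pos_of_pos hq
  calc _ = ∫ s in 0..t,
        y ^ n / Real.Gamma (α * n + β) * ((t - s) ^ (γ - 1) * s ^ (α * n + β - 1)) := by
        refine integral_congr_ae (ae_of_all _ fun s hs => ?_)
        rw [uIoc_of_le ht.le] at hs
        rw [sub_eq_add_neg (α * n + β), add_assoc, Real.rpow_mul_natCast_add hs.1, mul_pow,
          ← sub_eq_add_neg]
        field_simp
    _ = Real.Gamma γ * t ^ (β + γ - 1) * ((y * t ^ α) ^ n / Real.Gamma (α * n + (β + γ))) := by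
        rw [intervalIntegral.integral_const_mul, integral_sub_rpow_mul_rpow hγ hq ht,
          show γ + (α * n + β) - 1 = α * n + (β + γ - 1) by ring, Real.rpow_mul_natCast_add ht,
          show γ + (α * n + β) = α * n + (β + γ) by ring, mul_pow]
        field_simp

theorem integral_sub_rpow_mul_mittagLeffler (hα : 0 < α) (hβ : 0 < β) (hγ : 0 < γ) (ht : 0 < t)
    (x : ℝ) :
    ∫ s in 0..t, (t - s) ^ (γ - 1) * (s ^ (β - 1) * mittagLeffler α β (x * s ^ α))
      = Real.Gamma γ * t ^ (β + γ - 1) * mittagLeffler α (β + γ) (x * t ^ α) := by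
  set F : ℕ → ℝ → ℝ := fun n s =>
    (t - s) ^ (γ - 1) * (s ^ (β - 1) * ((x * s ^ α) ^ n / Real.Gamma (α * n + β)))
  have hint : ∀ n, IntervalIntegrable (F n) volume 0 t := fun n =>
    intervalIntegrable_sub_rpow_mul_rpow_mul hγ hβ ht <| Continuous.continuousOn <|
      ((continuous_const.mul (continuous_id.rpow_const fun _ => Or.inr hα.le)).pow n).div_const _
  have hnorm : ∀ n, ∫ s in Ioc 0 t, ‖F n s‖
      = Real.Gamma γ * t ^ (β + γ - 1) * ((|x| * t ^ α) ^ n / Real.Gamma (α * n + (β + γ))) := by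
    intro n
    rw [← intervalIntegral.integral_of_le ht.le,
      ← integral_sub_rpow_mul_mittagLeffler_term hα hβ hγ ht]
    refine integral_congr fun s hs => ?_
    rw [uIcc_of_le ht.le] at hs
    have hΓ : 0 < Real.Gamma (α * n + β) := Real.Gamma_pos_of_pos (by positivity)
    simp only [F, norm_mul, norm_div, norm_pow, Real.norm_eq_abs, abs_of_pos hΓ,
      abs_of_nonneg (Real.rpow_nonneg hs.1 _),
      abs_of_nonneg (Real.rpow_nonneg (sub_nonneg.2 hs.2) _)]
  have hsum : Summable fun n => ∫ s in Ioc 0 t, ‖F n s‖ := by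
    simp only [hnorm]
    exact (summable_mittagLeffler hα (by positivity) _).mul_left _
  calc _ = ∫ s in Ioc 0 t, ∑' n, F n s := by
        rw [intervalIntegral.integral_of_le ht.le]
        simp only [F, mittagLeffler, tsum_mul_left]
    _ = ∑' n, ∫ s in Ioc 0 t, F n s :=
        (integral_tsum_of_summable_integral_norm (fun n => (hint n).1) hsum).symm
    _ = _ := by
        simp only [← intervalIntegral.integral_of_le ht.le, F,
          integral_sub_rpow_mul_mittagLeffler_term hα hβ hγ ht, mittagLeffler, tsum_mul_left]

theorem mittagLeffler_volterra (hα : 0 < α) (hβ : 0 < β) (ht : 0 < t) :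
    Real.Gamma α * mittagLeffler α β (-t ^ α)
      + t ^ (1 - β) * ∫ s in 0..t, (t - s) ^ (α - 1) * (s ^ (β - 1) * mittagLeffler α β (-s ^ α))
      = Real.Gamma α / Real.Gamma β := by
  have h := integral_sub_rpow_mul_mittagLeffler hα hβ hα ht (-1)
  simp only [neg_one_mul] at h
  rw [h, mittagLeffler_eq_inv_Gamma_add_mul hα hβ (-t ^ α),
    show t ^ (1 - β) * (Real.Gamma α * t ^ (β + α - 1) * mittagLeffler α (β + α) (-t ^ α))
      = Real.Gamma α * (t ^ (1 - β) * t ^ (β + α - 1)) * mittagLeffler α (β + α) (-t ^ α) by ring,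
    ← Real.rpow_add ht, show 1 - β + (β + α - 1) = α by ring]
  ring

theorem integral_rpow_mul_mittagLeffler (hα : 0 < α) (ht : 0 ≤ t) :
    ∫ s in 0..t, s ^ (α - 1) * mittagLeffler α α (-s ^ α) = 1 - mittagLeffler α 1 (-t ^ α) := by
  rcases ht.eq_or_lt with rfl | ht
  · simp [Real.zero_rpow hα.ne', mittagLeffler_zero]
  have h := integral_sub_rpow_mul_mittagLeffler hα hα one_pos ht (-1)
  simp only [sub_self, Real.rpow_zero, one_mul, neg_one_mul, Real.Gamma_one,
    add_sub_cancel_right] at h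
  rw [h, mittagLeffler_eq_inv_Gamma_add_mul hα one_pos, Real.Gamma_one, add_comm 1 α]
  ring

end RiemannLiouville

theorem ContinuousOn.forall_mem_of_forall_Ico_mem {X : Type*} [TopologicalSpace X] {u : ℝ → X}
    {U : Set X} (hu : ContinuousOn u (Ici 0)) (hU : IsOpen U)
    (h : ∀ T ≥ 0, (∀ s ∈ Ico 0 T, u s ∈ U) → u T ∈ U) : ∀ t ≥ 0, u t ∈ U := by
  by_contra! ⟨t, ht, htU⟩
  set B := Ici 0 ∩ u ⁻¹' Uᶜ
  have hB : BddBelow B := ⟨0, fun _ hs => hs.1⟩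
  have hinf : sInf B ∈ B :=
    (hu.preimage_isClosed_of_isClosed isClosed_Ici hU.isClosed_compl).csInf_mem ⟨t, ht, htU⟩ hB
  exact hinf.2 <| h _ hinf.1 fun s hs =>
    by_contra fun hsU => hs.2.not_ge (csInf_le hB ⟨hs.1, hsU⟩)

theorem intervalIntegrable_sub_rpow {γ : ℝ} (hγ : -1 < γ) (T a b : ℝ) :
    IntervalIntegrable (fun s => (T - s) ^ γ) volume a b := by
  simpa using (intervalIntegrable_rpow' (a := T - a) (b := T - b) hγ).comp_sub_left T

theorem integral_sub_rpow_mul_le {α t T M : ℝ} {g : ℝ → ℝ} (hα : 0 < α) (htT : t ≤ T)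
    (hg : IntervalIntegrable (fun s => (T - s) ^ (α - 1) * g s) volume t T)
    (hM : ∀ s ∈ Ioo t T, g s ≤ M) :
    ∫ s in t..T, (T - s) ^ (α - 1) * g s ≤ (T - t) ^ α / α * M := by
  calc ∫ s in t..T, (T - s) ^ (α - 1) * g s ≤ ∫ s in t..T, (T - s) ^ (α - 1) * M :=
        integral_mono_on_of_le_Ioo htT hg
          ((intervalIntegrable_sub_rpow (by linarith) T t T).mul_const M) fun s hs =>
          mul_le_mul_of_nonneg_left (hM s hs) (Real.rpow_nonneg (by linarith [hs.2]) _)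
    _ = (T - t) ^ α / α * M := by
        rw [intervalIntegral.integral_mul_const,
          intervalIntegral.integral_comp_sub_left (fun r => r ^ (α - 1)) T, sub_self,
          integral_rpow (Or.inl (by linarith)), sub_add_cancel, Real.zero_rpow hα.ne', sub_zero]

theorem rpow_mul_sub_rpow_le {α β s t T : ℝ} (hαβ : α ≤ β) (hβ : β ≤ 1) (hs : 0 < s)
    (hst : s < t) (htT : t ≤ T) :
    T ^ (1 - β) * (T - s) ^ (α - 1) ≤ t ^ (1 - β) * (t - s) ^ (α - 1) := by
  have key : ∀ r, s < r → r ^ (1 - β) * (r - s) ^ (α - 1)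
      = (r / (r - s)) ^ (1 - β) * (r - s) ^ (α - β) := fun r hr => by
    rw [Real.div_rpow (by linarith) (by linarith), show α - 1 = (α - β) - (1 - β) by ring,
      Real.rpow_sub (sub_pos.2 hr) (α - β) (1 - β)]
    ring
  have hts : 0 < t - s := sub_pos.2 hst
  have hTs : 0 < T - s := by linarith
  rw [key T (by linarith), key t hst]
  have hquot : T / (T - s) ≤ t / (t - s) := by
    rw [div_le_div_iff₀ hTs hts]
    nlinarith
  exact mul_le_mul (Real.rpow_le_rpow (div_pos (by linarith) hTs).le hquot (by linarith))
    (Real.rpow_le_rpow_of_nonpos hts (by linarith) (by linarith)) (Real.rpow_nonneg hTs.le _)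
    (Real.rpow_nonneg (div_pos (by linarith) hts).le _)

section Volterra

variable {α β c a : ℝ} {f : ℝ → ℝ}

theorem mul_le_integral_tail_of_volterra (hα : 0 < α) (hαβ : α ≤ β) (hβ : β ≤ 1) (hc : 0 ≤ c)
    {t T : ℝ} (ht : 0 < t) (htT : t ≤ T) (hf : ContinuousOn f (Icc 0 T))
    (hV : ∀ r > 0,
      c * f r + r ^ (1 - β) * ∫ s in 0..r, (r - s) ^ (α - 1) * (s ^ (β - 1) * f s) = a)
    (hpos : ∀ s ∈ Ioo 0 T, 0 ≤ f s) (hfT : f T ≤ 0) :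
    c * f t ≤ T ^ (1 - β) * ∫ s in t..T, (T - s) ^ (α - 1) * (s ^ (β - 1) * f s) := by
  have hT : 0 < T := ht.trans_le htT
  have hβ0 : 0 < β := hα.trans_le hαβ
  have hKT := intervalIntegrable_sub_rpow_mul_rpow_mul hα hβ0 hT hf
  have hKt :=
    intervalIntegrable_sub_rpow_mul_rpow_mul hα hβ0 ht (hf.mono (Icc_subset_Icc le_rfl htT))
  have ht_mem : t ∈ uIcc 0 T := mem_uIcc_of_le ht.le htT
  have hsplit := integral_add_adjacent_intervals
    (hKT.mono_set (uIcc_subset_uIcc left_mem_uIcc ht_mem))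
    (hKT.mono_set (uIcc_subset_uIcc ht_mem right_mem_uIcc))
  have hcomp : T ^ (1 - β) * ∫ s in 0..t, (T - s) ^ (α - 1) * (s ^ (β - 1) * f s)
      ≤ t ^ (1 - β) * ∫ s in 0..t, (t - s) ^ (α - 1) * (s ^ (β - 1) * f s) := by
    rw [← intervalIntegral.integral_const_mul, ← intervalIntegral.integral_const_mul]
    refine integral_mono_on_of_le_Ioo ht.le
      ((hKT.mono_set (uIcc_subset_uIcc left_mem_uIcc ht_mem)).const_mul _) (hKt.const_mul _)
      fun s hs => ?_
    have hfs : 0 ≤ s ^ (β - 1) * f s :=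
      mul_nonneg (Real.rpow_nonneg hs.1.le _) (hpos s ⟨hs.1, hs.2.trans_le htT⟩)
    simpa only [mul_assoc] using
      mul_le_mul_of_nonneg_right (rpow_mul_sub_rpow_le hαβ hβ hs.1 hs.2 htT) hfs
  have hVT := hV T hT
  rw [← hsplit, mul_add] at hVT
  linarith [hV t ht, mul_nonpos_of_nonneg_of_nonpos hc hfT]

theorem pos_of_volterra (hα : 0 < α) (hαβ : α ≤ β) (hβ : β ≤ 1) (hc : 0 < c) (hf : Continuous f)
    (hf0 : 0 < f 0)
    (hV : ∀ r > 0,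
      c * f r + r ^ (1 - β) * ∫ s in 0..r, (r - s) ^ (α - 1) * (s ^ (β - 1) * f s) = a) :
    ∀ t ≥ 0, 0 < f t := by
  refine hf.continuousOn.forall_mem_of_forall_Ico_mem (U := Ioi 0) isOpen_Ioi fun T hT hbefore => ?_
  rcases hT.eq_or_lt with rfl | hT
  · exact hf0
  by_contra hfT
  rw [mem_Ioi, not_lt] at hfT
  have hsmall : ∀ᶠ t in 𝓝[<] T, T ^ (1 - β) * t ^ (β - 1) * (T - t) ^ α < α * c := by
    have hcont : ContinuousAt (fun t => T ^ (1 - β) * t ^ (β - 1) * (T - t) ^ α) T :=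
      ((continuousAt_id.rpow_const (Or.inl hT.ne')).const_mul _).mul
        ((continuousAt_const.sub continuousAt_id).rpow_const (Or.inr hα.le))
    refine (hcont.tendsto.mono_left nhdsWithin_le_nhds).eventually (gt_mem_nhds ?_)
    simpa [Real.zero_rpow hα.ne'] using mul_pos hα hc
  obtain ⟨t₁, ht₁small, ht₁⟩ := (hsmall.and (Ioo_mem_nhdsLT hT)).exists
  obtain ⟨ts, hts, hmax⟩ := isCompact_Icc.exists_isMaxOn (nonempty_Icc.2 ht₁.2.le) hf.continuousOn
  have hS : 0 < f ts := (hbefore t₁ ⟨ht₁.1.le, ht₁.2⟩).trans_le (hmax (left_mem_Icc.2 ht₁.2.le))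
  have hts0 : 0 < ts := ht₁.1.trans_le hts.1
  -- `f` is maximal at `ts` on `[t₁, T]`, where the kernel mass is too small to sustain it
  have htail := mul_le_integral_tail_of_volterra hα hαβ hβ hc.le hts0 hts.2 hf.continuousOn hV
    (fun s hs => (hbefore s ⟨hs.1.le, hs.2⟩).le) hfT
  have hint : ∫ s in ts..T, (T - s) ^ (α - 1) * (s ^ (β - 1) * f s)
      ≤ (T - ts) ^ α / α * (t₁ ^ (β - 1) * f ts) := by
    refine integral_sub_rpow_mul_le hα hts.2 ?_ fun s hs => ?_
    · exact (intervalIntegrable_sub_rpow_mul_rpow_mul hα (hα.trans_le hαβ) hT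
        hf.continuousOn).mono_set (uIcc_subset_uIcc (mem_uIcc_of_le hts0.le hts.2) right_mem_uIcc)
    · exact mul_le_mul (Real.rpow_le_rpow_of_nonpos ht₁.1 (hts.1.trans hs.1.le) (by linarith))
        (hmax ⟨hts.1.trans hs.1.le, hs.2.le⟩) (hbefore s ⟨by linarith [hs.1], hs.2⟩).le
        (Real.rpow_nonneg ht₁.1.le _)
  have hker : (T - ts) ^ α ≤ (T - t₁) ^ α :=
    Real.rpow_le_rpow (by linarith [hts.2]) (by linarith [hts.1]) hα.le
  have hTpow : 0 ≤ T ^ (1 - β) := Real.rpow_nonneg hT.le _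
  have ht₁pow : 0 ≤ t₁ ^ (β - 1) := Real.rpow_nonneg ht₁.1.le _
  have : c * f ts < c * f ts := calc
    c * f ts ≤ T ^ (1 - β) * ((T - ts) ^ α / α * (t₁ ^ (β - 1) * f ts)) :=
        htail.trans (mul_le_mul_of_nonneg_left hint hTpow)
    _ ≤ T ^ (1 - β) * t₁ ^ (β - 1) * (T - t₁) ^ α / α * f ts := by
        rw [show T ^ (1 - β) * ((T - ts) ^ α / α * (t₁ ^ (β - 1) * f ts))
          = T ^ (1 - β) * t₁ ^ (β - 1) * (T - ts) ^ α / α * f ts by ring]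
        gcongr
    _ < c * f ts := by
        gcongr
        rw [div_lt_iff₀ hα, mul_comm c]
        exact ht₁small
  exact this.false

end Volterra

theorem mittagLeffler_pos {α β : ℝ} (hα : 0 < α) (hαβ : α ≤ β) (hβ : β ≤ 1) {t : ℝ} (ht : 0 ≤ t) :
    0 < mittagLeffler α β (-t ^ α) := by
  have hβ0 : 0 < β := hα.trans_le hαβ
  refine pos_of_volterra (f := fun t => mittagLeffler α β (-t ^ α)) hα hαβ hβ
    (Real.Gamma_pos_of_pos hα) ?_ ?_ (fun r hr => mittagLeffler_volterra hα hβ0 hr) t ht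
  · exact (continuous_mittagLeffler hα hβ0).comp
      (continuous_id.rpow_const fun _ => Or.inr hα.le).neg
  · simpa [Real.zero_rpow hα.ne', mittagLeffler_zero] using Real.Gamma_pos_of_pos hβ0

/-- For `0<u₀<1` the mild solution of `ᶜD₀₊^α u = −u(1−u)`, `u(0)=u₀` satisfies `0<u<1`. -/
theorem global_solution_bounds (α u₀ : ℝ) (hα : 0 < α) (hα1 : α < 1)
    (h0 : 0 < u₀) (h1 : u₀ < 1)
    (u : ℝ → ℝ) (hu : ContinuousOn u (Set.Ici 0))
    (heq : ∀ t ≥ (0:ℝ), u t = mlE α (-(t ^ α)) * u₀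
      + ∫ s in (0:ℝ)..t, (t - s) ^ (α - 1) * mlE2 α (-((t - s) ^ α)) * (u s) ^ 2) :
    ∀ t ≥ (0:ℝ), 0 < u t ∧ u t < 1 := by
  refine hu.forall_mem_of_forall_Ico_mem (U := Ioo 0 1) isOpen_Ioo fun T hT hbefore => ?_
  set k : ℝ → ℝ := fun s => (T - s) ^ (α - 1) * mlE2 α (-((T - s) ^ α))
  have hk : ∀ s ≤ T, 0 ≤ k s := fun s hs =>
    mul_nonneg (Real.rpow_nonneg (sub_nonneg.2 hs) _)
      (mittagLeffler_pos hα le_rfl hα1.le (sub_nonneg.2 hs)).le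
  have hk_int : IntervalIntegrable k volume 0 T :=
    (intervalIntegrable_sub_rpow (by linarith) T 0 T).mul_continuousOn <| Continuous.continuousOn <|
      (continuous_mittagLeffler hα hα).comp
        ((continuous_const.sub continuous_id).rpow_const fun _ => Or.inr hα.le).neg
  have hku_int : IntervalIntegrable (fun s => k s * u s ^ 2) volume 0 T :=
    hk_int.mul_continuousOn ((hu.mono (by simp [uIcc_of_le hT, Icc_subset_Ici_self])).pow 2)
  have hk_total : ∫ s in 0..T, k s = 1 - mlE α (-(T ^ α)) := by
    simp only [k, sub_self, sub_zero,
      intervalIntegral.integral_comp_sub_left (fun r => r ^ (α - 1) * mlE2 α (-(r ^ α)))]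
    exact integral_rpow_mul_mittagLeffler hα hT
  have hI_nonneg : 0 ≤ ∫ s in 0..T, k s * u s ^ 2 :=
    intervalIntegral.integral_nonneg hT fun s hs => mul_nonneg (hk s hs.2) (sq_nonneg _)
  have hI_le : ∫ s in 0..T, k s * u s ^ 2 ≤ ∫ s in 0..T, k s :=
    integral_mono_on_of_le_Ioo hT hku_int hk_int fun s hs => by
      have hus := hbefore s ⟨hs.1.le, hs.2⟩
      exact mul_le_of_le_one_right (hk s hs.2.le) (pow_le_one₀ hus.1.le hus.2.le)
  have hE : 0 < mlE α (-(T ^ α)) := mittagLeffler_pos hα hα1.le le_rfl hT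
  rw [heq T hT]
  constructor <;> nlinarith
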